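/- arXiv:2201.03518 — 3 statements merged into one kernel-verified Lean document; each statement's English description precedes it below -/
import Mathlib

section
/- Let n, N ∈ ℕ with b = N and let δ ∈ (0,1]. Then for all z, w ∈ ℂ with |w| ≤ 1 − δ: |K_{N+n}(z,w)| ≤ (N/π) · e^{−N·((|z| − 1 + δ)₊)²/2}, where t₊ := max(t,0). -/
open MeasureTheory Complex
open scoped Real BigOperators

noncomputable section

/-- Correlation kernel `K_M` with magnetic field strength `b`. -/
def Kker (b : ℝ) (M : ℕ) (z w : ℂ) : ℂ :=
  ∑ j ∈ Finset.range M,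
    (((b ^ (j + 1) / (Real.pi * (Nat.factorial j : ℝ))) : ℝ) : ℂ)
      * z ^ j * (starRingEnd ℂ w) ^ j
      * Complex.exp (-(b : ℂ) * (((‖z‖ ^ 2 + ‖w‖ ^ 2 : ℝ)) : ℂ) / 2)

/-- Bergman kernel `K_∞`. -/
def Kinf (b : ℝ) (z w : ℂ) : ℂ :=
  ((b / Real.pi : ℝ) : ℂ) *
    Complex.exp (-(b : ℂ) / 2 *
      ((((‖z‖ ^ 2 + ‖w‖ ^ 2 : ℝ)) : ℂ) - 2 * z * (starRingEnd ℂ w)))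

/-- Quasi-hole wave function `Ψ_qh(w;z)`. -/
def Psiqh (b : ℝ) {n N : ℕ} (w : Fin n → ℂ) (z : Fin N → ℂ) : ℂ :=
  (∏ j : Fin n, ∏ k : Fin N, (w j - z k)) *
  (∏ p ∈ Finset.univ.filter (fun p : Fin N × Fin N => p.1 < p.2), (z p.1 - z p.2)) *
  ∏ k : Fin N, Complex.exp (-(b : ℂ) * ((‖z k‖ ^ 2 : ℝ) : ℂ) / 2)

/-- `c_qh(w)^{-2} = ∫ |Ψ_qh(w;z)|² dz`. -/
def Zqh (b : ℝ) {n : ℕ} (N : ℕ) (w : Fin n → ℂ) : ℝ :=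
  ∫ z : Fin N → ℂ, ‖Psiqh b w z‖ ^ 2

/-- Normalization constant `c_qh(w)`. -/
def cqh (b : ℝ) {n : ℕ} (N : ℕ) (w : Fin n → ℂ) : ℝ := (Zqh b N w) ^ (-(1 / 2 : ℝ))

/-- Partial derivative of `f` at `w` in the (real) direction `v` of the `j`-th complex coordinate. -/
def pd {n : ℕ} {E : Type*} [NormedAddCommGroup E] [NormedSpace ℝ E]
    (v : ℂ) (j : Fin n) (f : (Fin n → ℂ) → E) (w : Fin n → ℂ) : E :=
  deriv (fun t : ℝ => f (Function.update w j (w j + (t : ℂ) * v))) 0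

/-- `δ_N(κ) = κ √(log N / N)`. -/
def deltaN (N : ℕ) (κ : ℝ) : ℝ := κ * Real.sqrt (Real.log N / N)

/-- Emerging vector potential `A_j = ½∇^⊥_{y_j} log c_qh^{-2}` (with `b = N`), as a pair of reals. -/
def Apot {n : ℕ} (N : ℕ) (j : Fin n) (w : Fin n → ℂ) : ℝ × ℝ :=
  (-(pd Complex.I j (fun v => Real.log (Zqh (N : ℝ) N v)) w) / 2,
   (pd 1 j (fun v => Real.log (Zqh (N : ℝ) N v)) w) / 2)

/-- Emerging scalar potential `V_j = ½Δ_{y_j} log c_qh^{-2}` (with `b = N`). -/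
def Vpot {n : ℕ} (N : ℕ) (j : Fin n) (w : Fin n → ℂ) : ℝ :=
  (pd 1 j (fun v => pd 1 j (fun u => Real.log (Zqh (N : ℝ) N u)) v) w
    + pd Complex.I j (fun v => pd Complex.I j (fun u => Real.log (Zqh (N : ℝ) N u)) v) w) / 2

/-- `|(-i∇_{y_j} - c y_j^⊥)Φ|²` pointwise, for `Φ` a function of the tracer variables only. -/
def kinW {n : ℕ} (c : ℝ) (j : Fin n) (Φ : (Fin n → ℂ) → ℂ) (w : Fin n → ℂ) : ℝ :=
  ‖(-Complex.I) * pd 1 j Φ w - ((c * (-(w j).im) : ℝ) : ℂ) * Φ w‖ ^ 2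
  + ‖(-Complex.I) * pd Complex.I j Φ w - ((c * (w j).re : ℝ) : ℂ) * Φ w‖ ^ 2

/-- `∫ |(-i∇_{y_j} - c y_j^⊥)Ψ|²` for a joint state `Ψ` of tracers and bath. -/
def kinE {n : ℕ} (N : ℕ) (c : ℝ) (j : Fin n)
    (Ψ : (Fin n → ℂ) → (Fin N → ℂ) → ℂ) : ℝ :=
  ∫ p : (Fin n → ℂ) × (Fin N → ℂ),
    (‖(-Complex.I) * pd 1 j (fun v => Ψ v p.2) p.1
        - ((c * (-(p.1 j).im) : ℝ) : ℂ) * Ψ p.1 p.2‖ ^ 2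
     + ‖(-Complex.I) * pd Complex.I j (fun v => Ψ v p.2) p.1
        - ((c * (p.1 j).re : ℝ) : ℂ) * Ψ p.1 p.2‖ ^ 2)

/-- Statistics-transmuting phase factor `∏_{i<j} e^{i arg(y_i - y_j)}`. -/
def phase {n : ℕ} (w : Fin n → ℂ) : ℂ :=
  ∏ p ∈ Finset.univ.filter (fun p : Fin n × Fin n => p.1 < p.2),
    Complex.exp (Complex.I * (Complex.arg (w p.1 - w p.2) : ℂ))

/-- Vandermonde determinant `△(w) = ∏_{i<j}(w_j - w_i)`. -/
def Vdm {n : ℕ} (w : Fin n → ℂ) : ℂ :=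
  ∏ p ∈ Finset.univ.filter (fun p : Fin n × Fin n => p.1 < p.2), (w p.2 - w p.1)

/-- `Υ_N(v) = det[(π/N)K_{N+n}(v_i,v_j)]` for an arbitrary tuple `v` (kernel `K_{N+n}`, `b = N`). -/
def Ups (N n : ℕ) {m : ℕ} (v : Fin m → ℂ) : ℂ :=
  Matrix.det (Matrix.of fun i j : Fin m =>
    ((Real.pi / N : ℝ) : ℂ) * Kker (N : ℝ) (N + n) (v i) (v j))

/-- Wirtinger derivative `∂_{w_j}`. -/
def wdp {n : ℕ} (j : Fin n) (f : (Fin n → ℂ) → ℂ) : (Fin n → ℂ) → ℂ :=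
  fun w => (pd 1 j f w - Complex.I * pd Complex.I j f w) / 2

/-- Conjugate Wirtinger derivative `∂_{conj w_j}`. -/
def wdm {n : ℕ} (j : Fin n) (f : (Fin n → ℂ) → ℂ) : (Fin n → ℂ) → ℂ :=
  fun w => (pd 1 j f w + Complex.I * pd Complex.I j f w) / 2

/-- Multi-index iterated derivative `∏_j (D j)^{α j}`. -/
def multiD {n : ℕ} (D : Fin n → ((Fin n → ℂ) → ℂ) → ((Fin n → ℂ) → ℂ)) (α : Fin n → ℕ) :
    ((Fin n → ℂ) → ℂ) → ((Fin n → ℂ) → ℂ) :=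
  (List.ofFn fun j : Fin n => (D j)^[α j]).foldr (· ∘ ·) id

/-- Wirtinger derivative `∂_z` of a kernel. -/
def dZ (f : ℂ → ℂ → ℂ) : ℂ → ℂ → ℂ := fun z w =>
  (deriv (fun t : ℝ => f (z + (t : ℂ)) w) 0
    - Complex.I * deriv (fun t : ℝ => f (z + (t : ℂ) * Complex.I) w) 0) / 2

/-- Wirtinger derivative `∂_{conj z}` of a kernel. -/
def dZb (f : ℂ → ℂ → ℂ) : ℂ → ℂ → ℂ := fun z w =>
  (deriv (fun t : ℝ => f (z + (t : ℂ)) w) 0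
    + Complex.I * deriv (fun t : ℝ => f (z + (t : ℂ) * Complex.I) w) 0) / 2

/-- Wirtinger derivative `∂_w` of a kernel. -/
def dW (f : ℂ → ℂ → ℂ) : ℂ → ℂ → ℂ := fun z w =>
  (deriv (fun t : ℝ => f z (w + (t : ℂ))) 0
    - Complex.I * deriv (fun t : ℝ => f z (w + (t : ℂ) * Complex.I)) 0) / 2

/-- Wirtinger derivative `∂_{conj w}` of a kernel. -/
def dWb (f : ℂ → ℂ → ℂ) : ℂ → ℂ → ℂ := fun z w =>
  (deriv (fun t : ℝ => f z (w + (t : ℂ))) 0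
    + Complex.I * deriv (fun t : ℝ => f z (w + (t : ℂ) * Complex.I)) 0) / 2

/-- First component of the correction field `a(y) = y^⊥/(e^{|y|²}-1)`. -/
def aCorr1 (u : ℂ) : ℝ := -u.im / (Real.exp (‖u‖ ^ 2) - 1)

/-- Second component of the correction field `a(y)`. -/
def aCorr2 (u : ℂ) : ℝ := u.re / (Real.exp (‖u‖ ^ 2) - 1)

/-- Correction potential `v(y)`. -/
def vCorr (u : ℂ) : ℝ :=
  2 * (1 - (1 - ‖u‖ ^ 2) * Real.exp (‖u‖ ^ 2))
    / (Real.exp (‖u‖ ^ 2) - 1) ^ 2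


/-- pointwise bound on the correlation kernel `K_{N+n}` outside the droplet. -/
theorem kernel_bound_outside_droplet (n N : ℕ) (δ : ℝ) (hδ0 : 0 < δ) (hδ1 : δ ≤ 1)
    (z w : ℂ) (hw : ‖w‖ ≤ 1 - δ) :
    ‖Kker (N : ℝ) (N + n) z w‖
      ≤ (N : ℝ) / Real.pi
        * Real.exp (-(N : ℝ) * max (‖z‖ - 1 + δ) 0 ^ 2 / 2) := by
  set r := ‖z‖ with hrdef
  set s := ‖w‖ with hsdef
  have hr0 : 0 ≤ r := norm_nonneg z
  have hs0 : 0 ≤ s := norm_nonneg w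
  have hN0 : (0:ℝ) ≤ N := Nat.cast_nonneg N
  have hπ : (0:ℝ) < Real.pi := Real.pi_pos
  set t := max (r - 1 + δ) 0 with htdef
  have key : ‖Kker (N : ℝ) (N+n) z w‖
      ≤ (N/Real.pi) * Real.exp ((N:ℝ)*r*s - N*(r^2+s^2)/2) := by
    unfold Kker
    calc ‖(∑ j ∈ Finset.range (N+n),
          (((N:ℝ) ^ (j + 1) / (Real.pi * (Nat.factorial j : ℝ)) : ℝ) : ℂ)
            * z ^ j * (starRingEnd ℂ w) ^ j
            * Complex.exp (-(N : ℂ) * (((‖z‖ ^ 2 + ‖w‖ ^ 2 : ℝ)) : ℂ) / 2))‖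
        ≤ ∑ j ∈ Finset.range (N+n), ‖
          ((((N:ℝ) ^ (j + 1) / (Real.pi * (Nat.factorial j : ℝ)) : ℝ) : ℂ)
            * z ^ j * (starRingEnd ℂ w) ^ j
            * Complex.exp (-(N : ℂ) * (((‖z‖ ^ 2 + ‖w‖ ^ 2 : ℝ)) : ℂ) / 2))‖ :=
        norm_sum_le _ _
      _ = ∑ j ∈ Finset.range (N+n),
          (N/Real.pi) * (((N:ℝ)*r*s)^j / (Nat.factorial j : ℝ)) * Real.exp (-(N*(r^2+s^2))/2) := by
        refine Finset.sum_congr rfl fun j _ => ?_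
        have hexp : (-(N : ℂ) * (((r ^ 2 + s ^ 2 : ℝ)) : ℂ) / 2)
            = (((-(N*(r^2+s^2))/2 : ℝ)) : ℂ) := by push_cast; ring
        rw [norm_mul, norm_mul, norm_mul, Complex.norm_real, Real.norm_eq_abs, norm_pow, norm_pow,
          Complex.norm_conj, hexp, Complex.norm_exp_ofReal]
        rw [← hrdef, ← hsdef, _root_.abs_of_nonneg (show (0:ℝ) ≤ (N:ℝ)^(j+1)/(Real.pi * (Nat.factorial j:ℝ)) by positivity)]
        field_simp
        ring
      _ = (N/Real.pi) * (∑ j ∈ Finset.range (N+n), ((N:ℝ)*r*s)^j / (Nat.factorial j : ℝ))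
            * Real.exp (-(N*(r^2+s^2))/2) := by
        rw [← Finset.sum_mul, ← Finset.mul_sum]
      _ ≤ (N/Real.pi) * Real.exp ((N:ℝ)*r*s) * Real.exp (-(N*(r^2+s^2))/2) := by
        gcongr
        exact Real.sum_le_exp_of_nonneg (by positivity) _
      _ = (N/Real.pi) * Real.exp ((N:ℝ)*r*s - N*(r^2+s^2)/2) := by
        rw [mul_assoc, ← Real.exp_add]; ring_nf
  refine key.trans (mul_le_mul_of_nonneg_left (Real.exp_le_exp.mpr ?_) (by positivity))
  -- need N*r*s - N*(r^2+s^2)/2 ≤ -N*t^2/2, i.e. t^2 ≤ (r-s)^2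
  have hts : t ^ 2 ≤ (r - s) ^ 2 := by
    rcases le_or_gt (r - 1 + δ) 0 with h | h
    · rw [htdef, max_eq_right h]
      simpa using sq_nonneg (r - s)
    · rw [htdef, max_eq_left h.le]
      have h1 : s ≤ 1 - δ := hw
      have h2 : 0 ≤ r - s := by linarith
      nlinarith
  nlinarith [mul_nonneg hN0 (sq_nonneg (r - s))]


end
end

section
/- For all integers N ≥ 1, n ≥ 0 and every x ∈ [0,1): Σ_{j=N+n}^{∞} N^{j+1} x^j / j! ≤ √(5N/(4π)) · x^{N+n} e^N / (1 − x). -/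
open MeasureTheory Complex
open scoped Real BigOperators

noncomputable section

lemma stirling_lower (N : ℕ) (hN : 1 ≤ N) : Real.sqrt π ≤ Stirling.stirlingSeq N := by
  obtain ⟨m, rfl⟩ := Nat.exists_eq_add_of_le' hN
  exact Stirling.stirlingSeq'_antitone.le_of_tendsto
    (Stirling.tendsto_stirlingSeq_sqrt_pi.comp (Filter.tendsto_add_atTop_nat 1)) m

lemma key_stirling (N : ℕ) (hN : 1 ≤ N) :
    (N : ℝ) ^ (N + 1) / Nat.factorial N ≤ Real.sqrt (5 * N / (4 * π)) * Real.exp N := by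
  have hNpos : (0 : ℝ) < N := by exact_mod_cast hN
  have hfacpos : (0 : ℝ) < Nat.factorial N := by exact_mod_cast (Nat.factorial_pos N)
  have hs := stirling_lower N hN
  rw [Stirling.stirlingSeq, le_div_iff₀ (by positivity)] at hs
  -- hs : √π * (√(2N) * (N/e)^N) ≤ N!
  have hexp : ((N : ℝ) / Real.exp 1) ^ N = (N : ℝ) ^ N / Real.exp N := by
    rw [div_pow, ← Real.exp_nat_mul, mul_one]
  have hNle : (N : ℝ) ≤ Real.sqrt (5 * N / (4 * π)) * Real.sqrt (2 * N) * Real.sqrt π := by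
    rw [← Real.sqrt_mul (by positivity), ← Real.sqrt_mul (by positivity)]
    rw [show (5 * (N:ℝ) / (4 * π)) * (2 * N) * π = 5 * N ^ 2 / 2 by
      field_simp; ring]
    nlinarith [Real.sq_sqrt (show (0:ℝ) ≤ 5 * (N:ℝ)^2 / 2 by positivity),
      Real.sqrt_nonneg (5 * (N:ℝ)^2 / 2), sq_nonneg (Real.sqrt (5 * (N:ℝ)^2/2) - (N:ℝ))]
  rw [div_le_iff₀ hfacpos]
  calc (N : ℝ) ^ (N + 1) = (N : ℝ) * (N : ℝ) ^ N := by ring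
    _ ≤ (Real.sqrt (5 * N / (4 * π)) * Real.sqrt (2 * N) * Real.sqrt π) * (N : ℝ) ^ N := by
        apply mul_le_mul_of_nonneg_right hNle (by positivity)
    _ = Real.sqrt (5 * N / (4 * π)) * Real.exp N *
          (Real.sqrt π * (Real.sqrt (2 * N) * (((N:ℝ) / Real.exp 1) ^ N))) := by
        rw [hexp]; field_simp
    _ ≤ Real.sqrt (5 * N / (4 * π)) * Real.exp N * Nat.factorial N := by
        apply mul_le_mul_of_nonneg_left hs (by positivity)

lemma pow_div_fac_le (N : ℕ) (j : ℕ) (hj : N ≤ j) :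
    (N : ℝ) ^ j / Nat.factorial j ≤ (N : ℝ) ^ N / Nat.factorial N := by
  induction j, hj using Nat.le_induction with
  | base => exact le_refl _
  | succ j hj ih =>
    have h1 : (N : ℝ) ^ (j+1) / Nat.factorial (j+1)
        = ((N:ℝ) / (j+1)) * ((N : ℝ) ^ j / Nat.factorial j) := by
      rw [Nat.factorial_succ]; push_cast; field_simp; ring
    rw [h1]
    have h2 : (N:ℝ) / (j+1) ≤ 1 := by
      rw [div_le_one (by positivity)]
      have : (N:ℝ) ≤ j := by exact_mod_cast hj
      linarith
    calc ((N:ℝ) / (j+1)) * ((N : ℝ) ^ j / Nat.factorial j)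
        ≤ 1 * ((N : ℝ) ^ j / Nat.factorial j) :=
          mul_le_mul_of_nonneg_right h2 (by positivity)
      _ ≤ (N : ℝ) ^ N / Nat.factorial N := by rw [one_mul]; exact ih


/-- tail bound for the exponential series. -/
theorem tail_exponential_series_bound (N n : ℕ) (hN : 1 ≤ N) (x : ℝ)
    (hx0 : 0 ≤ x) (hx1 : x < 1) :
    (∑' k : ℕ, (N : ℝ) ^ (N + n + k + 1) * x ^ (N + n + k) / (Nat.factorial (N + n + k)))
      ≤ Real.sqrt (5 * N / (4 * Real.pi)) * x ^ (N + n) * Real.exp N / (1 - x) := by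
  have key := key_stirling N hN
  set C : ℝ := (N : ℝ) ^ (N + 1) / Nat.factorial N with hC
  have hCpos : 0 < C := by positivity
  have hterm : ∀ k : ℕ, (N : ℝ) ^ (N + n + k + 1) * x ^ (N + n + k) / (Nat.factorial (N + n + k))
      ≤ C * x ^ (n + k) * x ^ N := by
    intro k
    have h1 := pow_div_fac_le N (N + n + k) (by omega)
    have : (N : ℝ) ^ (N + n + k + 1) * x ^ (N + n + k) / (Nat.factorial (N + n + k))
        = ((N:ℝ) * ((N : ℝ) ^ (N+n+k) / Nat.factorial (N+n+k))) * x ^ (N + n + k) := by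
      rw [pow_succ]; ring
    rw [this, hC]
    have h2 : (N:ℝ) * ((N : ℝ) ^ (N+n+k) / Nat.factorial (N+n+k)) ≤ (N : ℝ) ^ (N + 1) / Nat.factorial N := by
      rw [pow_succ]
      calc (N:ℝ) * ((N : ℝ) ^ (N+n+k) / Nat.factorial (N+n+k))
          ≤ (N:ℝ) * ((N : ℝ) ^ N / Nat.factorial N) :=
            mul_le_mul_of_nonneg_left h1 (by positivity)
        _ = (N : ℝ) ^ N * (N:ℝ) / Nat.factorial N := by ring
    calc ((N:ℝ) * ((N : ℝ) ^ (N+n+k) / Nat.factorial (N+n+k))) * x ^ (N + n + k)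
        ≤ ((N : ℝ) ^ (N + 1) / Nat.factorial N) * x ^ (N + n + k) :=
          mul_le_mul_of_nonneg_right h2 (by positivity)
      _ = (N : ℝ) ^ (N + 1) / Nat.factorial N * x ^ (n + k) * x ^ N := by
          rw [show N + n + k = n + k + N from by omega, pow_add]; ring
  have hsumgeo : Summable (fun k : ℕ => C * x ^ (n + k) * x ^ N) := by
    apply Summable.mul_right
    apply Summable.mul_left
    exact ((summable_geometric_of_lt_one hx0 hx1).comp_injective (add_right_injective n))
  have hsum1 : Summable (fun k : ℕ => (N : ℝ) ^ (N + n + k + 1) * x ^ (N + n + k) / (Nat.factorial (N + n + k))) :=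
    Summable.of_nonneg_of_le (fun k => by positivity) hterm hsumgeo
  have h3 := Summable.tsum_le_tsum hterm hsum1 hsumgeo
  refine h3.trans ?_
  have h4 : ∑' k : ℕ, C * x ^ (n + k) * x ^ N = C * (x ^ (N + n) / (1 - x)) := by
    rw [tsum_mul_right, tsum_mul_left]
    have : ∑' k : ℕ, x ^ (n + k) = x ^ n / (1-x) := by
      simp_rw [pow_add]
      rw [tsum_mul_left, tsum_geometric_of_lt_one hx0 hx1, div_eq_mul_inv]
    rw [this, pow_add]; ring
  rw [h4, mul_div_assoc']
  apply div_le_div_of_nonneg_right ?_ (by linarith)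
  calc C * x ^ (N + n)
      ≤ (Real.sqrt (5 * N / (4 * π)) * Real.exp N) * x ^ (N + n) :=
        mul_le_mul_of_nonneg_right key (by positivity)
    _ = Real.sqrt (5 * ↑N / (4 * π)) * x ^ (N + n) * Real.exp ↑N := by ring


end
end

section
/- Let n ∈ ℕ, N ∈ ℕ with b = N, and set φ(x) := x − log x − 1 for x > 0. Then for all z, w ∈ ℂ∖{0} with |z|·|w| < 1: | K_∞(z,w) − K_{N+n}(z,w) | ≤ (1/π) · √(5N/(4π)) · e^{−N(φ(|z|²) + φ(|w|²))/2} / (1 − |z·conj(w)|). -/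
open MeasureTheory Complex
open scoped Real BigOperators

noncomputable section

/-- `φ(x) = x - log x - 1`. -/
def phiFn (x : ℝ) : ℝ := x - Real.log x - 1


private theorem stirling_lb' (N : ℕ) (hN : 1 ≤ N) :
    Real.sqrt (2 * Real.pi * N) * ((N : ℝ) / Real.exp 1) ^ N ≤ (N.factorial : ℝ) := by
  have h1 : Real.sqrt π ≤ Stirling.stirlingSeq N := by
    obtain ⟨m, rfl⟩ := Nat.exists_eq_add_of_le hN
    have ht : Filter.Tendsto (Stirling.stirlingSeq ∘ Nat.succ) Filter.atTop
        (nhds (Real.sqrt π)) :=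
      Stirling.tendsto_stirlingSeq_sqrt_pi.comp (Filter.tendsto_add_atTop_nat 1)
    have := Stirling.stirlingSeq'_antitone.le_of_tendsto ht m
    simpa [Nat.succ_eq_add_one, Nat.add_comm] using this
  have hd : (0:ℝ) < Real.sqrt (2 * N) * ((N:ℝ) / Real.exp 1) ^ N := by positivity
  have h2 : (N.factorial : ℝ)
      = Stirling.stirlingSeq N * (Real.sqrt (2 * N) * ((N:ℝ) / Real.exp 1) ^ N) := by
    rw [Stirling.stirlingSeq]; field_simp
  rw [h2]
  have h3 : Real.sqrt (2 * Real.pi * N) = Real.sqrt π * Real.sqrt (2 * N) := by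
    rw [← Real.sqrt_mul Real.pi_pos.le]; ring_nf
  rw [h3, mul_assoc]
  exact mul_le_mul_of_nonneg_right h1 hd.le

private theorem exp_tail' (u : ℂ) (M : ℕ) (r : ℝ) (hr0 : 0 ≤ r) (hr1 : r < 1)
    (hb : ∀ i : ℕ, ‖u‖ ^ (i + M) / ((i + M).factorial : ℝ)
        ≤ (‖u‖ ^ M / (M.factorial : ℝ)) * r ^ i) :
    ‖Complex.exp u - ∑ j ∈ Finset.range M, u ^ j / (j.factorial : ℝ)‖ ≤
      (‖u‖ ^ M / (M.factorial : ℝ)) * (1 - r)⁻¹ := by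
  have hsum : Summable fun n : ℕ => u ^ n / (n.factorial : ℂ) :=
    NormedSpace.expSeries_div_summable u
  have hexp : Complex.exp u = ∑' n : ℕ, u ^ n / (n.factorial : ℂ) := by
    rw [Complex.exp_eq_exp_ℂ, NormedSpace.exp_eq_tsum_div]
  have hsplit := hsum.sum_add_tsum_nat_add M
  have hEq : Complex.exp u - ∑ j ∈ Finset.range M, u ^ j / (j.factorial : ℝ)
      = ∑' i : ℕ, u ^ (i + M) / ((i + M).factorial : ℂ) := by
    rw [hexp, ← hsplit]
    push_cast
    ring
  rw [hEq]
  have hgeo : HasSum (fun i : ℕ => (‖u‖ ^ M / (M.factorial : ℝ)) * r ^ i)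
      ((‖u‖ ^ M / (M.factorial : ℝ)) * (1 - r)⁻¹) :=
    (hasSum_geometric_of_lt_one hr0 hr1).mul_left _
  refine tsum_of_norm_bounded hgeo fun i => ?_
  have hnorm : ‖u ^ (i + M) / ((i + M).factorial : ℂ)‖
      = ‖u‖ ^ (i + M) / ((i + M).factorial : ℝ) := by
    simp [norm_div, norm_pow, Complex.norm_natCast]
  rw [hnorm]
  exact hb i

private theorem term_bound' (N n : ℕ) (hN : 1 ≤ N) (r : ℝ) (hr : 0 ≤ r) (i : ℕ) :
    ((N : ℝ) * r) ^ (i + (N + n)) / ((i + (N + n)).factorial : ℝ)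
      ≤ (((N : ℝ) * r) ^ (N + n) / ((N + n).factorial : ℝ)) * r ^ i := by
  set M := N + n with hM
  have hNpos : (0:ℝ) < N := by exact_mod_cast hN
  have hfac : (M.factorial : ℝ) * (N : ℝ) ^ i ≤ ((i + M).factorial : ℝ) := by
    have h1 : M.factorial * N ^ i ≤ (M + i).factorial :=
      le_trans (Nat.mul_le_mul_left _ (Nat.pow_le_pow_left (by omega) i))
        Nat.factorial_mul_pow_le_factorial
    rw [add_comm i M]
    exact_mod_cast h1
  have hden : (0:ℝ) < (M.factorial : ℝ) * (N : ℝ) ^ i := by positivity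
  have h2 : ((N : ℝ) * r) ^ (i + M) / ((i + M).factorial : ℝ)
      ≤ ((N : ℝ) * r) ^ (i + M) / ((M.factorial : ℝ) * (N : ℝ) ^ i) := by
    apply div_le_div_of_nonneg_left _ hden hfac
    positivity
  refine h2.trans_eq ?_
  rw [pow_add, mul_pow]
  field_simp

private theorem key_identity' (N M : ℕ) (z w : ℂ) :
    Kinf (N : ℝ) z w - Kker (N : ℝ) M z w
      = (((N : ℝ) / Real.pi : ℝ) : ℂ)
        * Complex.exp (-(N : ℂ) * (((‖z‖ ^ 2 + ‖w‖ ^ 2 : ℝ)) : ℂ) / 2)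
        * (Complex.exp ((N : ℂ) * z * starRingEnd ℂ w)
            - ∑ j ∈ Finset.range M, ((N : ℂ) * z * starRingEnd ℂ w) ^ j / (j.factorial : ℝ)) := by
  have hpi : (Real.pi : ℂ) ≠ 0 := by exact_mod_cast Real.pi_ne_zero
  have h1 : Kinf (N : ℝ) z w
      = (((N : ℝ) / Real.pi : ℝ) : ℂ)
        * Complex.exp (-(N : ℂ) * (((‖z‖ ^ 2 + ‖w‖ ^ 2 : ℝ)) : ℂ) / 2)
        * Complex.exp ((N : ℂ) * z * starRingEnd ℂ w) := by
    rw [Kinf]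
    conv_rhs => rw [mul_assoc, ← Complex.exp_add]
    congr 2
    push_cast
    ring
  have h2 : Kker (N : ℝ) M z w
      = (((N : ℝ) / Real.pi : ℝ) : ℂ)
        * Complex.exp (-(N : ℂ) * (((‖z‖ ^ 2 + ‖w‖ ^ 2 : ℝ)) : ℂ) / 2)
        * ∑ j ∈ Finset.range M, ((N : ℂ) * z * starRingEnd ℂ w) ^ j / (j.factorial : ℝ) := by
    rw [Kker, Finset.mul_sum]
    refine Finset.sum_congr rfl fun j _ => ?_
    have hfj : ((j.factorial : ℝ) : ℂ) ≠ 0 := by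
      exact_mod_cast Nat.cast_ne_zero.mpr j.factorial_ne_zero
    push_cast
    field_simp
    ring
  rw [h1, h2, mul_sub]

private theorem scalar_ineq' (N n : ℕ) (hN : 1 ≤ N) (r : ℝ) (hr0 : 0 ≤ r) (hr1 : r < 1) :
    (N : ℝ) * (((N : ℝ) * r) ^ (N + n) / ((N + n).factorial : ℝ))
      ≤ Real.sqrt (5 * N / (4 * Real.pi)) * Real.exp N * r ^ N := by
  set M := N + n with hM
  have hNpos : (0:ℝ) < N := by exact_mod_cast hN
  have hrM : r ^ M ≤ r ^ N := pow_le_pow_of_le_one hr0 hr1.le (Nat.le_add_right N n)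
  have hA1 : (N:ℝ) ^ M / (M.factorial : ℝ) ≤ (N:ℝ) ^ N / (N.factorial : ℝ) := by
    rw [div_le_div_iff₀ (by positivity) (by positivity)]
    have hnat : N ^ M * N.factorial ≤ N ^ N * M.factorial := by
      have hfp := Nat.factorial_mul_pow_le_factorial (m := N) (n := n)
      have h2 : N.factorial * N ^ n ≤ M.factorial :=
        le_trans (Nat.mul_le_mul_left _ (Nat.pow_le_pow_left (Nat.le_succ N) n)) hfp
      calc N ^ M * N.factorial = N ^ N * (N.factorial * N ^ n) := by rw [hM, pow_add]; ring
        _ ≤ N ^ N * M.factorial := Nat.mul_le_mul_left _ h2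
    exact_mod_cast hnat
  have hA : ((N:ℝ) * r) ^ M / (M.factorial : ℝ) ≤ (N:ℝ) ^ N / (N.factorial : ℝ) * r ^ N := by
    rw [mul_pow]
    calc (N:ℝ) ^ M * r ^ M / (M.factorial : ℝ)
        = (N:ℝ) ^ M / (M.factorial : ℝ) * r ^ M := by ring
      _ ≤ (N:ℝ) ^ M / (M.factorial : ℝ) * r ^ N :=
          mul_le_mul_of_nonneg_left hrM (by positivity)
      _ ≤ (N:ℝ) ^ N / (N.factorial : ℝ) * r ^ N :=
          mul_le_mul_of_nonneg_right hA1 (by positivity)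
  have hQ : (N:ℝ) ≤ Real.sqrt (5 * N / (4 * π)) * Real.sqrt (2 * π * N) := by
    rw [← Real.sqrt_mul (by positivity)]
    have h52 : 5 * (N:ℝ) / (4 * π) * (2 * π * N) = 5 / 2 * (N:ℝ) ^ 2 := by
      field_simp; ring
    rw [h52, Real.sqrt_mul (by norm_num), Real.sqrt_sq hNpos.le]
    have h1 : (1:ℝ) ≤ Real.sqrt (5 / 2) := by
      rw [show (1:ℝ) = Real.sqrt 1 from Real.sqrt_one.symm]
      exact Real.sqrt_le_sqrt (by norm_num)
    nlinarith
  have hpow : ((N:ℝ) / Real.exp 1) ^ N * Real.exp N = (N:ℝ) ^ N := by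
    rw [div_pow, show Real.exp (N:ℝ) = Real.exp 1 ^ N by
      rw [← Real.exp_nat_mul]; norm_num]
    field_simp
  have hC : (N:ℝ) * ((N:ℝ) ^ N / (N.factorial : ℝ))
      ≤ Real.sqrt (5 * N / (4 * π)) * Real.exp N := by
    have hst := stirling_lb' N hN
    rw [show (N:ℝ) * ((N:ℝ) ^ N / (N.factorial : ℝ))
        = (N:ℝ) * (N:ℝ) ^ N / (N.factorial : ℝ) by ring,
      div_le_iff₀ (by positivity)]
    calc (N:ℝ) * (N:ℝ) ^ N
        ≤ (Real.sqrt (5 * N / (4 * π)) * Real.sqrt (2 * π * N)) * (N:ℝ) ^ N :=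
          mul_le_mul_of_nonneg_right hQ (by positivity)
      _ = Real.sqrt (5 * N / (4 * π)) * Real.exp N
            * (Real.sqrt (2 * π * N) * (((N:ℝ) / Real.exp 1) ^ N)) := by
          rw [show Real.sqrt (5 * (N:ℝ) / (4 * π)) * Real.exp (N:ℝ)
              * (Real.sqrt (2 * π * (N:ℝ)) * (((N:ℝ) / Real.exp 1) ^ N))
            = Real.sqrt (5 * (N:ℝ) / (4 * π)) * Real.sqrt (2 * π * (N:ℝ))
              * (((N:ℝ) / Real.exp 1) ^ N * Real.exp (N:ℝ)) by ring, hpow]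
      _ ≤ Real.sqrt (5 * N / (4 * π)) * Real.exp N * (N.factorial : ℝ) :=
          mul_le_mul_of_nonneg_left hst (by positivity)
  calc (N:ℝ) * (((N:ℝ) * r) ^ M / (M.factorial : ℝ))
      ≤ (N:ℝ) * ((N:ℝ) ^ N / (N.factorial : ℝ) * r ^ N) :=
        mul_le_mul_of_nonneg_left hA hNpos.le
    _ = (N:ℝ) * ((N:ℝ) ^ N / (N.factorial : ℝ)) * r ^ N := by ring
    _ ≤ Real.sqrt (5 * N / (4 * π)) * Real.exp N * r ^ N :=
        mul_le_mul_of_nonneg_right hC (by positivity)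

private theorem Ex_id' (N : ℕ) (a c : ℝ) (ha : 0 < a) (hc : 0 < c) :
    Real.exp (-(N:ℝ) * (phiFn (a ^ 2) + phiFn (c ^ 2)) / 2)
      = Real.exp (-(N:ℝ) * (a ^ 2 + c ^ 2) / 2) * Real.exp N * (a * c) ^ N := by
  have hac : (a * c) ^ N = Real.exp ((N:ℝ) * (Real.log a + Real.log c)) := by
    rw [Real.exp_nat_mul, Real.exp_add, Real.exp_log ha, Real.exp_log hc]
  rw [hac, ← Real.exp_add, ← Real.exp_add]
  congr 1
  have hla : Real.log (a ^ 2) = 2 * Real.log a := by rw [Real.log_pow]; norm_num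
  have hlc : Real.log (c ^ 2) = 2 * Real.log c := by rw [Real.log_pow]; norm_num
  rw [phiFn, phiFn, hla, hlc]
  ring


/-- comparison of `K_{N+n}` with the Bergman kernel `K_∞`. -/
theorem kernel_comparison_Bergman (n N : ℕ) (z w : ℂ) (hz : z ≠ 0) (hw : w ≠ 0)
    (h : ‖z‖ * ‖w‖ < 1) :
    ‖Kinf (N : ℝ) z w - Kker (N : ℝ) (N + n) z w‖
      ≤ (1 / Real.pi) * Real.sqrt (5 * N / (4 * Real.pi))
        * Real.exp (-(N : ℝ) * (phiFn (‖z‖ ^ 2) + phiFn (‖w‖ ^ 2)) / 2)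
        / (1 - ‖z * starRingEnd ℂ w‖) := by
  by_cases hN0 : N = 0
  · subst hN0
    simp [Kinf, Kker]
  · have hN : 1 ≤ N := Nat.one_le_iff_ne_zero.mpr hN0
    have hNpos : (0:ℝ) < N := by exact_mod_cast hN
    set a := ‖z‖ with ha_def
    set c := ‖w‖ with hc_def
    have ha : 0 < a := norm_pos_iff.mpr hz
    have hc : 0 < c := norm_pos_iff.mpr hw
    set r := a * c with hr_def
    have hr0 : 0 ≤ r := by positivity
    have hr1 : r < 1 := h
    have h1r : (0:ℝ) < 1 - r := by linarith
    set M := N + n with hM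
    set u := (N : ℂ) * z * starRingEnd ℂ w with hu_def
    have hu : ‖u‖ = (N : ℝ) * r := by
      rw [hu_def, norm_mul, norm_mul, Complex.norm_natCast, Complex.norm_conj, hr_def, mul_assoc]
    have habs_zw : ‖z * starRingEnd ℂ w‖ = r := by
      rw [norm_mul, Complex.norm_conj]
    rw [key_identity' N M z w, norm_mul, norm_mul]
    have e1 : ‖((((N:ℝ) / Real.pi : ℝ)) : ℂ)‖ = (N:ℝ) / Real.pi := by
      rw [Complex.norm_real, Real.norm_eq_abs]
      exact abs_of_nonneg (by positivity)
    have e2 : ‖Complex.exp (-(N : ℂ) * ((a ^ 2 + c ^ 2 : ℝ) : ℂ) / 2)‖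
        = Real.exp (-(N:ℝ) * (a ^ 2 + c ^ 2) / 2) := by
      rw [show -(N : ℂ) * ((a ^ 2 + c ^ 2 : ℝ) : ℂ) / 2
          = (((-(N:ℝ) * (a ^ 2 + c ^ 2) / 2 : ℝ)) : ℂ) by push_cast; ring,
        Complex.norm_exp_ofReal]
    rw [e1, e2, habs_zw]
    have htail : ‖Complex.exp u - ∑ j ∈ Finset.range M, u ^ j / (j.factorial : ℝ)‖
        ≤ ((N:ℝ) * r) ^ M / (M.factorial : ℝ) * (1 - r)⁻¹ := by
      have hb : ∀ i : ℕ, ‖u‖ ^ (i + M) / ((i + M).factorial : ℝ)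
          ≤ (‖u‖ ^ M / (M.factorial : ℝ)) * r ^ i := by
        intro i
        rw [hu]
        exact term_bound' N n hN r hr0 i
      have := exp_tail' u M r hr0 hr1 hb
      rwa [hu] at this
    have hEx : Real.exp (-(N:ℝ) * (phiFn (a ^ 2) + phiFn (c ^ 2)) / 2)
        = Real.exp (-(N:ℝ) * (a ^ 2 + c ^ 2) / 2) * Real.exp N * r ^ N :=
      Ex_id' N a c ha hc
    rw [hEx]
    have hmain := scalar_ineq' N n hN r hr0 hr1
    calc (N:ℝ) / Real.pi * Real.exp (-(N:ℝ) * (a ^ 2 + c ^ 2) / 2)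
          * ‖Complex.exp u - ∑ j ∈ Finset.range M, u ^ j / (j.factorial : ℝ)‖
        ≤ (N:ℝ) / Real.pi * Real.exp (-(N:ℝ) * (a ^ 2 + c ^ 2) / 2)
          * (((N:ℝ) * r) ^ M / (M.factorial : ℝ) * (1 - r)⁻¹) :=
          mul_le_mul_of_nonneg_left htail (by positivity)
      _ = ((N:ℝ) * (((N:ℝ) * r) ^ M / (M.factorial : ℝ)))
          * (Real.exp (-(N:ℝ) * (a ^ 2 + c ^ 2) / 2) * (1 - r)⁻¹ / Real.pi) := by ring
      _ ≤ (Real.sqrt (5 * N / (4 * Real.pi)) * Real.exp N * r ^ N)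
          * (Real.exp (-(N:ℝ) * (a ^ 2 + c ^ 2) / 2) * (1 - r)⁻¹ / Real.pi) :=
          mul_le_mul_of_nonneg_right hmain (by positivity)
      _ = 1 / Real.pi * Real.sqrt (5 * N / (4 * Real.pi))
          * (Real.exp (-(N:ℝ) * (a ^ 2 + c ^ 2) / 2) * Real.exp N * r ^ N) / (1 - r) := by
          rw [div_eq_mul_inv _ (1 - r)]; ring


end
end
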